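/- Let H, R be finite-dimensional complex Hilbert spaces, B = ℂ², |ψ⟩ a unit vector in H⊗B⊗R, and γ, ε ∈ [0,1]. If there exists a (γ,ε)-superdense decoder against |ψ⟩, then there exists a (γ,ε)-radiation decoder against |ψ⟩. -/

import Mathlib

open Matrix BigOperators
open scoped ComplexOrder

noncomputable section

namespace BHRD

/-- A (qu)bit index. -/
abbrev Bit := ZMod 2

/-- The Pauli `X` matrix. -/
def Xm : Matrix Bit Bit ℂ := Matrix.of fun i j => if i = j + 1 then 1 else 0

/-- The Pauli `Z` matrix. -/
def Zm : Matrix Bit Bit ℂ := Matrix.of fun i j => if i = j then (if j = 1 then -1 else 1) else 0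

/-- The Pauli mask `X^x Z^z`. -/
def pauli (x z : Bit) : Matrix Bit Bit ℂ := Xm ^ x.val * Zm ^ z.val

/-- The EPR vector `(|00⟩+|11⟩)/√2`. -/
def epr : Bit × Bit → ℂ := fun p => if p.1 = p.2 then (((Real.sqrt 2 : ℝ) : ℂ))⁻¹ else 0

variable {dH dR : ℕ}

/-- The reduced density matrix of `|ψ⟩ ∈ H ⊗ B ⊗ R` on `B ⊗ R`, i.e. `Tr_H |ψ⟩⟨ψ|`. -/
def rhoBR (ψ : Fin dH × Bit × Fin dR → ℂ) :
    Matrix (Bit × Fin dR) (Bit × Fin dR) ℂ :=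
  Matrix.of fun p q => ∑ h : Fin dH, ψ (h, p) * (starRingEnd ℂ) (ψ (h, q))

/-- `(X^x Z^z) ⊗ I_R` acting on `B ⊗ R`. -/
def maskB (dR : ℕ) (x z : Bit) : Matrix (Bit × Fin dR) (Bit × Fin dR) ℂ :=
  Matrix.of fun p q => if p.2 = q.2 then pauli x z p.1 q.1 else 0

/-- The masked state `ρ^{xz} = (X^x Z^z ⊗ I) Tr_H|ψ⟩⟨ψ| (X^x Z^z ⊗ I)†`. -/
def rhoXZ (ψ : Fin dH × Bit × Fin dR → ℂ) (x z : Bit) :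
    Matrix (Bit × Fin dR) (Bit × Fin dR) ℂ :=
  maskB dR x z * rhoBR ψ * (maskB dR x z)ᴴ

/-- `K` is a family of Kraus operators for a (trace-preserving) quantum channel. -/
def IsKraus {α β : Type*} [Fintype α] [Fintype β] [DecidableEq β] {k : ℕ}
    (K : Fin k → Matrix α β ℂ) : Prop :=
  ∑ i, (K i)ᴴ * K i = 1

/-- Application of the channel with Kraus operators `K` to a state `ρ`. -/
def applyCh {α β : Type*} [Fintype α] [Fintype β] {k : ℕ}
    (K : Fin k → Matrix α β ℂ) (ρ : Matrix β β ℂ) : Matrix α α ℂ :=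
  ∑ i, K i * ρ * (K i)ᴴ

/-- The extension `id_B ⊗ A` of a channel `A : R → D ⊗ F` given by a Kraus operator `K`:
a Kraus operator from `B ⊗ R` to `B ⊗ D ⊗ F`. -/
def extB (K : Matrix (Bit × Bit) (Fin dR) ℂ) :
    Matrix (Bit × Bit × Bit) (Bit × Fin dR) ℂ :=
  Matrix.of fun p q => if p.1 = q.1 then K p.2 q.2 else 0

/-- The projector `I_{B⊗D} ⊗ |0⟩⟨0|_F` on `B ⊗ D ⊗ F`. -/
def PF0 : Matrix (Bit × Bit × Bit) (Bit × Bit × Bit) ℂ :=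
  Matrix.of fun p q =>
    if p.1 = q.1 ∧ p.2.1 = q.2.1 ∧ p.2.2 = 0 ∧ q.2.2 = 0 then 1 else 0

/-- The projector `|epr⟩⟨epr|_{B⊗D} ⊗ |0⟩⟨0|_F` on `B ⊗ D ⊗ F`. -/
def Pepr0 : Matrix (Bit × Bit × Bit) (Bit × Bit × Bit) ℂ :=
  Matrix.of fun p q =>
    (if p.2.2 = 0 ∧ q.2.2 = 0 then 1 else 0) *
      (epr (p.1, p.2.1) * (starRingEnd ℂ) (epr (q.1, q.2.1)))

/-- `K` is (the Kraus family of) a `(γ,ε)`-radiation decoder against `ψ`. -/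
def IsRadDecoder (ψ : Fin dH × Bit × Fin dR → ℂ) (γ ε : ℝ) {k : ℕ}
    (K : Fin k → Matrix (Bit × Bit) (Fin dR) ℂ) : Prop :=
  IsKraus K ∧
  γ ≤ ((PF0 * applyCh (fun i => extB (K i)) (rhoBR ψ)).trace).re ∧
  ((PF0 * applyCh (fun i => extB (K i)) (rhoBR ψ)).trace).re * (1/4 + (3/4) * ε) ≤
    ((Pepr0 * applyCh (fun i => extB (K i)) (rhoBR ψ)).trace).re

/-- The projector `I_P ⊗ |0⟩⟨0|_F` on `P ⊗ F`. -/
def QF0 : Matrix ((Bit × Bit) × Bit) ((Bit × Bit) × Bit) ℂ :=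
  Matrix.of fun p q => if p.1 = q.1 ∧ p.2 = 0 ∧ q.2 = 0 then 1 else 0

/-- The projector `|x,z⟩⟨x,z|_P ⊗ |0⟩⟨0|_F` on `P ⊗ F`. -/
def Qxz0 (x z : Bit) : Matrix ((Bit × Bit) × Bit) ((Bit × Bit) × Bit) ℂ :=
  Matrix.of fun p q => if p = ((x, z), 0) ∧ q = ((x, z), 0) then 1 else 0

/-- `K` is (the Kraus family of) a `(γ,ε)`-superdense decoder against `ψ`. -/
def IsSupDecoder (ψ : Fin dH × Bit × Fin dR → ℂ) (γ ε : ℝ) {k : ℕ}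
    (K : Fin k → Matrix ((Bit × Bit) × Bit) (Bit × Fin dR) ℂ) : Prop :=
  IsKraus K ∧
  γ ≤ (1/4) * ∑ x : Bit, ∑ z : Bit, ((QF0 * applyCh K (rhoXZ ψ x z)).trace).re ∧
  ((1/4) * ∑ x : Bit, ∑ z : Bit, ((QF0 * applyCh K (rhoXZ ψ x z)).trace).re) *
      (1/4 + (3/4) * ε) ≤
    (1/4) * ∑ x : Bit, ∑ z : Bit, ((Qxz0 x z * applyCh K (rhoXZ ψ x z)).trace).re

end BHRD

namespace BHRD

open scoped Kronecker

/-!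
The radiation decoder shares an EPR pair between a fresh qubit `B'` and its output `D`, runs the
superdense decoder on `B' ⊗ R`, and on reading a label `(x, z)` from `P` corrects `D` by
`(XˣZᶻ)ᵀ`; by the transpose trick this equals masking `B'` by `XˣZᶻ` before decoding. Projecting
`B ⊗ D` onto `|epr⟩` identifies `B` with `B'`, so the branch `(x, z)` reports, with weight `1/4`,
the superdense decoder's success on `ρ^{xz}`. For the flag, averaging over the four Pauli masks
replaces the `B`-part of `ρ` by the maximally mixed state (Pauli twirl), while the radiation
decoder never touches `B`; so both see only `Tr_B ρ` and raise the flag with the same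
probability.
-/

lemma sum_bit {M : Type*} [AddCommMonoid M] (f : Bit → M) : ∑ b, f b = f 0 + f 1 :=
  Fin.sum_univ_two f

lemma bit_cases (b : Bit) : b = 0 ∨ b = 1 := by
  revert b; decide

lemma pauli_apply (x z u d : Bit) :
    pauli x z u d = if u = d + x then (-1) ^ (z.val * d.val) else 0 := by
  have h : (1 : Bit) + 1 = 0 := rfl
  have h1 : (1 : Bit).val = 1 := rfl
  rcases bit_cases x with rfl | rfl <;> rcases bit_cases z with rfl | rfl <;>
    rcases bit_cases u with rfl | rfl <;> rcases bit_cases d with rfl | rfl <;>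
    simp [pauli, Xm, Zm, Matrix.mul_apply, sum_bit, h, h1]

variable {dR : ℕ} {m : Type*}

lemma neg_one_pow_mul_self {R : Type*} [Monoid R] [HasDistribNeg R] (n : ℕ) :
    (-1 : R) ^ n * (-1) ^ n = 1 := by
  rw [← pow_add, ← two_mul, pow_mul, neg_one_sq, one_pow]

lemma mul_maskB_apply (A : Matrix m (Bit × Fin dR) ℂ) (x z : Bit) (p : m) (d : Bit) (r : Fin dR) :
    (A * maskB dR x z) p (d, r) = (-1) ^ (z.val * d.val) * A p (d + x, r) := by
  simp [Matrix.mul_apply, Fintype.sum_prod_type, maskB, pauli_apply, mul_comm]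

lemma maskB_mul_apply (N : Matrix (Bit × Fin dR) m ℂ) (x z b : Bit) (r : Fin dR) (q : m) :
    (maskB dR x z * N) (b, r) q = (-1) ^ (z.val * (b + x).val) * N (b + x, r) q := by
  have h : ∀ u : Bit, b = u + x ↔ u = b + x := by revert b x; decide
  simp [Matrix.mul_apply, Fintype.sum_prod_type, maskB, pauli_apply, h]

lemma mul_conjTranspose_maskB_apply (N : Matrix m (Bit × Fin dR) ℂ) (x z b : Bit) (r : Fin dR)
    (i : m) :
    (N * (maskB dR x z)ᴴ) i (b, r) = (-1) ^ (z.val * (b + x).val) * N i (b + x, r) := by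
  rw [← Matrix.conjTranspose_conjTranspose N, ← Matrix.conjTranspose_mul,
    Matrix.conjTranspose_apply, maskB_mul_apply]
  simp

def traceLeft {ι n R : Type*} [Fintype ι] [AddCommMonoid R] (ρ : Matrix (ι × n) (ι × n) R) :
    Matrix n n R :=
  Matrix.of fun r r' => ∑ b, ρ (b, r) (b, r')

lemma traceLeft_sum {ι n κ R : Type*} [Fintype ι] [AddCommMonoid R] (s : Finset κ)
    (ρ : κ → Matrix (ι × n) (ι × n) R) :
    traceLeft (∑ i ∈ s, ρ i) = ∑ i ∈ s, traceLeft (ρ i) := by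
  ext r r'
  simp only [traceLeft, Matrix.of_apply, Matrix.sum_apply]
  exact Finset.sum_comm

lemma traceLeft_one {ι n R : Type*} [Fintype ι] [DecidableEq ι] [DecidableEq n] [Semiring R] :
    traceLeft (1 : Matrix (ι × n) (ι × n) R) = (Fintype.card ι : R) • 1 := by
  ext r r'
  simp [traceLeft, Matrix.one_apply]

lemma sum_sign_mul_sign (a a' : Bit) :
    ∑ z : Bit, (-1 : ℂ) ^ (z.val * a.val) * (-1) ^ (z.val * a'.val) = if a = a' then 2 else 0 := by
  have h1 : (1 : Bit).val = 1 := rfl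
  rcases bit_cases a with rfl | rfl <;> rcases bit_cases a' with rfl | rfl <;>
    norm_num [sum_bit, h1]

lemma sum_maskB_mul_mul_conjTranspose (ρ : Matrix (Bit × Fin dR) (Bit × Fin dR) ℂ) :
    ∑ x, ∑ z, maskB dR x z * ρ * (maskB dR x z)ᴴ =
      (2 : ℂ) • ((1 : Matrix Bit Bit ℂ) ⊗ₖ traceLeft ρ) := by
  ext ⟨b, r⟩ ⟨b', r'⟩
  have hz : ∀ x, ∑ z, (maskB dR x z * ρ * (maskB dR x z)ᴴ) (b, r) (b', r') =
      if b = b' then 2 * ρ (b + x, r) (b + x, r') else 0 := by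
    intro x
    simp only [mul_conjTranspose_maskB_apply, maskB_mul_apply, ← mul_assoc]
    rw [← Finset.sum_mul, sum_sign_mul_sign]
    rcases eq_or_ne b b' with rfl | h
    · simp
    · simp [h, h.symm]
  simp only [Matrix.sum_apply, hz, Matrix.smul_apply, Matrix.kronecker_apply, Matrix.one_apply,
    traceLeft, Matrix.of_apply]
  split_ifs
  · rw [one_mul, smul_eq_mul, Finset.mul_sum]
    exact Equiv.sum_comp (Equiv.addLeft b) fun u => 2 * ρ (u, r) (u, r')
  · simp

lemma mul_mul_conjTranspose_apply {n R : Type*} [Fintype n] [NonUnitalSemiring R] [Star R]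
    (C : Matrix m n R) (ρ : Matrix n n R) (i j : m) :
    (C * ρ * Cᴴ) i j = ∑ q, ∑ q', C i q * ρ q q' * star (C j q') := by
  simp only [Matrix.mul_apply, Matrix.conjTranspose_apply, Finset.sum_mul]
  exact Finset.sum_comm

lemma star_ofReal (a : ℝ) : star (a : ℂ) = a :=
  Complex.conj_ofReal a

lemma inv_sqrt_two_mul_self : ((Real.sqrt 2 : ℝ) : ℂ)⁻¹ * ((Real.sqrt 2 : ℝ) : ℂ)⁻¹ = 2⁻¹ := by
  rw [← mul_inv, ← Complex.ofReal_mul, Real.mul_self_sqrt zero_le_two, Complex.ofReal_ofNat]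

lemma trace_QF0_mul (M : Matrix ((Bit × Bit) × Bit) ((Bit × Bit) × Bit) ℂ) :
    (QF0 * M).trace = ∑ p, M (p, 0) (p, 0) := by
  simp [Matrix.trace, Matrix.mul_apply, QF0, Fintype.sum_prod_type, ite_and]

lemma trace_Qxz0_mul (x z : Bit) (M : Matrix ((Bit × Bit) × Bit) ((Bit × Bit) × Bit) ℂ) :
    (Qxz0 x z * M).trace = M ((x, z), 0) ((x, z), 0) := by
  simp [Matrix.trace, Matrix.mul_apply, Qxz0, ite_and]

lemma trace_PF0_mul (M : Matrix (Bit × Bit × Bit) (Bit × Bit × Bit) ℂ) :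
    (PF0 * M).trace = ∑ b, ∑ d, M (b, d, 0) (b, d, 0) := by
  simp [Matrix.trace, Matrix.mul_apply, PF0, Fintype.sum_prod_type, ite_and]

lemma trace_Pepr0_mul (M : Matrix (Bit × Bit × Bit) (Bit × Bit × Bit) ℂ) :
    (Pepr0 * M).trace = 2⁻¹ * ∑ b, ∑ b', M (b, b, 0) (b', b', 0) := by
  simp [Matrix.trace, Matrix.mul_apply, Pepr0, epr, Fintype.sum_prod_type, ite_and,
    apply_ite (starRingEnd ℂ), inv_sqrt_two_mul_self, ← Finset.mul_sum]
  exact Finset.sum_comm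

lemma extB_mul_mul_conjTranspose_apply (K : Matrix (Bit × Bit) (Fin dR) ℂ)
    (ρ : Matrix (Bit × Fin dR) (Bit × Fin dR) ℂ) (b d f b' d' f' : Bit) :
    (extB K * ρ * (extB K)ᴴ) (b, d, f) (b', d', f') =
      ∑ r, ∑ r', K (d, f) r * ρ (b, r) (b', r') * star (K (d', f') r') := by
  simp [mul_mul_conjTranspose_apply, Fintype.sum_prod_type, extB, apply_ite (starRingEnd ℂ)]

lemma trace_PF0_extB_mul_mul_conjTranspose (K : Matrix (Bit × Bit) (Fin dR) ℂ)
    (ρ : Matrix (Bit × Fin dR) (Bit × Fin dR) ℂ) :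
    (PF0 * (extB K * ρ * (extB K)ᴴ)).trace = ∑ d, (K * traceLeft ρ * Kᴴ) (d, 0) (d, 0) := by
  simp only [trace_PF0_mul, extB_mul_mul_conjTranspose_apply]
  simp only [mul_mul_conjTranspose_apply, traceLeft, Matrix.of_apply, Finset.mul_sum,
    Finset.sum_mul]
  rw [Finset.sum_comm]
  refine Finset.sum_congr rfl fun d _ => ?_
  rw [Finset.sum_comm]
  exact Finset.sum_congr rfl fun r _ => Finset.sum_comm

/-- `(⟨x,z|_P ⊗ I_F) (A (XˣZᶻ ⊗ I_R) ⊗ I_D) (|epr⟩_{B'D} ⊗ I_R)`, the factor `(√2)⁻¹` being the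
amplitude of `|epr⟩`. -/
def radKraus (A : Matrix ((Bit × Bit) × Bit) (Bit × Fin dR) ℂ) (x z : Bit) :
    Matrix (Bit × Bit) (Fin dR) ℂ :=
  Matrix.of fun df r => ((Real.sqrt 2 : ℝ) : ℂ)⁻¹ * (A * maskB dR x z) ((x, z), df.2) (df.1, r)

section

variable (A : Matrix ((Bit × Bit) × Bit) (Bit × Fin dR) ℂ) (x z : Bit)

lemma radKraus_apply (d f : Bit) (r : Fin dR) :
    radKraus A x z (d, f) r =
      ((Real.sqrt 2 : ℝ) : ℂ)⁻¹ * ((-1) ^ (z.val * d.val) * A ((x, z), f) (d + x, r)) := by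
  rw [radKraus, Matrix.of_apply, mul_maskB_apply]

lemma sum_radKraus_mul_star (f : Bit) (r r' : Fin dR) :
    ∑ d, radKraus A x z (d, f) r * star (radKraus A x z (d, f) r') =
      2⁻¹ * ∑ u, A ((x, z), f) (u, r) * star (A ((x, z), f) (u, r')) := by
  have hterm : ∀ d, radKraus A x z (d, f) r * star (radKraus A x z (d, f) r') =
      2⁻¹ * (A ((x, z), f) (d + x, r) * star (A ((x, z), f) (d + x, r'))) := fun d => by
    simp only [radKraus_apply, star_mul', star_inv₀, star_pow, star_neg, star_one, star_ofReal]
    rw [show ∀ c σ a b : ℂ, c * (σ * a) * (c * (σ * b)) = c * c * (σ * σ) * (a * b) from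
      fun _ _ _ _ => by ring, inv_sqrt_two_mul_self, neg_one_pow_mul_self, mul_one]
  rw [Finset.sum_congr rfl fun d _ => hterm d, ← Finset.mul_sum]
  exact congrArg _ (Equiv.sum_comp (Equiv.addRight x)
    fun u => A ((x, z), f) (u, r) * star (A ((x, z), f) (u, r')))

lemma sum_radKraus_mul_mul_conjTranspose (τ : Matrix (Fin dR) (Fin dR) ℂ) :
    ∑ d, (radKraus A x z * τ * (radKraus A x z)ᴴ) (d, 0) (d, 0) =
      2⁻¹ * (A * ((1 : Matrix Bit Bit ℂ) ⊗ₖ τ) * Aᴴ) ((x, z), 0) ((x, z), 0) := by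
  calc ∑ d, (radKraus A x z * τ * (radKraus A x z)ᴴ) (d, 0) (d, 0)
      = ∑ r, ∑ r', τ r r' * ∑ d, radKraus A x z (d, 0) r * star (radKraus A x z (d, 0) r') := by
        simp only [mul_mul_conjTranspose_apply, Finset.mul_sum]
        rw [Finset.sum_comm]
        refine Finset.sum_congr rfl fun r _ => ?_
        rw [Finset.sum_comm]
        exact Finset.sum_congr rfl fun r' _ => Finset.sum_congr rfl fun d _ => by ring
    _ = 2⁻¹ * ∑ u, ∑ r, ∑ r', A ((x, z), 0) (u, r) * τ r r' * star (A ((x, z), 0) (u, r')) := by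
        simp only [sum_radKraus_mul_star, Finset.mul_sum]
        conv_rhs => rw [Finset.sum_comm]
        refine Finset.sum_congr rfl fun r _ => ?_
        rw [Finset.sum_comm]
        exact Finset.sum_congr rfl fun r' _ => Finset.sum_congr rfl fun u _ => by ring
    _ = _ := by
        simp [mul_mul_conjTranspose_apply, Fintype.sum_prod_type, Matrix.one_apply]

lemma trace_Pepr0_extB_radKraus (ρ : Matrix (Bit × Fin dR) (Bit × Fin dR) ℂ) :
    (Pepr0 * (extB (radKraus A x z) * ρ * (extB (radKraus A x z))ᴴ)).trace =
      4⁻¹ * (Qxz0 x z * (A * (maskB dR x z * ρ * (maskB dR x z)ᴴ) * Aᴴ)).trace := by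
  set C := A * maskB dR x z
  have hC : A * (maskB dR x z * ρ * (maskB dR x z)ᴴ) * Aᴴ = C * ρ * Cᴴ := by
    simp only [C, Matrix.conjTranspose_mul, Matrix.mul_assoc]
  rw [trace_Pepr0_mul, trace_Qxz0_mul, hC, mul_mul_conjTranspose_apply]
  simp only [extB_mul_mul_conjTranspose_apply, radKraus, Matrix.of_apply, Fintype.sum_prod_type,
    Finset.mul_sum, star_mul', star_inv₀, star_ofReal]
  refine Finset.sum_congr rfl fun b _ => ?_
  rw [Finset.sum_comm]
  refine Finset.sum_congr rfl fun r _ => Finset.sum_congr rfl fun b' _ =>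
    Finset.sum_congr rfl fun r' _ => ?_
  linear_combination (2⁻¹ * (C ((x, z), 0) (b, r) * ρ (b, r) (b', r') *
    star (C ((x, z), 0) (b', r')))) * inv_sqrt_two_mul_self

lemma sum_conjTranspose_radKraus_mul :
    ∑ x, ∑ z, (radKraus A x z)ᴴ * radKraus A x z = (2⁻¹ : ℂ) • traceLeft (Aᴴ * A) := by
  ext r r'
  have hx : ∀ x z, ((radKraus A x z)ᴴ * radKraus A x z) r r' =
      2⁻¹ * ∑ f, ∑ u, A ((x, z), f) (u, r') * star (A ((x, z), f) (u, r)) := fun x z => by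
    simp only [Matrix.mul_apply, Matrix.conjTranspose_apply, Fintype.sum_prod_type]
    rw [Finset.sum_comm, Finset.mul_sum]
    simp only [mul_comm (star _), sum_radKraus_mul_star]
  simp only [Matrix.sum_apply, hx, traceLeft, Matrix.smul_apply, Matrix.of_apply, Matrix.mul_apply,
    Matrix.conjTranspose_apply, smul_eq_mul, ← Finset.mul_sum]
  conv_rhs => rw [Finset.sum_comm]
  simp only [Fintype.sum_prod_type, mul_comm (star _)]

lemma sum_trace_PF0_extB_radKraus (ρ : Matrix (Bit × Fin dR) (Bit × Fin dR) ℂ) :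
    ∑ x, ∑ z, (PF0 * (extB (radKraus A x z) * ρ * (extB (radKraus A x z))ᴴ)).trace =
      4⁻¹ * ∑ x, ∑ z, (QF0 * (A * (maskB dR x z * ρ * (maskB dR x z)ᴴ) * Aᴴ)).trace := by
  have htwirl : ∑ x, ∑ z, (QF0 * (A * (maskB dR x z * ρ * (maskB dR x z)ᴴ) * Aᴴ)).trace =
      2 * ∑ x, ∑ z,
        (A * ((1 : Matrix Bit Bit ℂ) ⊗ₖ traceLeft ρ) * Aᴴ) ((x, z), 0) ((x, z), 0) := by
    calc _ = (QF0 * (A * (∑ x, ∑ z, maskB dR x z * ρ * (maskB dR x z)ᴴ) * Aᴴ)).trace := by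
          simp only [Matrix.mul_sum, Matrix.sum_mul, Matrix.trace_sum]
      _ = _ := by
          rw [sum_maskB_mul_mul_conjTranspose, Matrix.mul_smul, Matrix.smul_mul, Matrix.mul_smul,
            Matrix.trace_smul, trace_QF0_mul, Fintype.sum_prod_type, smul_eq_mul]
  simp only [trace_PF0_extB_mul_mul_conjTranspose, sum_radKraus_mul_mul_conjTranspose, htwirl,
    ← Finset.mul_sum, ← mul_assoc]
  norm_num

end

section

variable {k : ℕ} (S : Fin k → Matrix ((Bit × Bit) × Bit) (Bit × Fin dR) ℂ)

def radDecoder : Fin (Fintype.card (Fin k × Bit × Bit)) → Matrix (Bit × Bit) (Fin dR) ℂ :=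
  fun j =>
    let t := (Fintype.equivFin (Fin k × Bit × Bit)).symm j
    radKraus (S t.1) t.2.1 t.2.2

lemma sum_radDecoder {M : Type*} [AddCommMonoid M] (F : Matrix (Bit × Bit) (Fin dR) ℂ → M) :
    ∑ j, F (radDecoder S j) = ∑ i, ∑ x, ∑ z, F (radKraus (S i) x z) := by
  calc ∑ j, F (radDecoder S j)
      = ∑ t : Fin k × Bit × Bit, F (radKraus (S t.1) t.2.1 t.2.2) :=
        Equiv.sum_comp (Fintype.equivFin (Fin k × Bit × Bit)).symm
          fun t => F (radKraus (S t.1) t.2.1 t.2.2)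
    _ = _ := by simp only [Fintype.sum_prod_type]

lemma isKraus_radDecoder (hS : IsKraus S) : IsKraus (radDecoder S) := by
  rw [IsKraus, sum_radDecoder S fun K => Kᴴ * K]
  simp only [sum_conjTranspose_radKraus_mul]
  rw [← Finset.smul_sum, ← traceLeft_sum, hS, traceLeft_one, smul_smul]
  norm_num

lemma trace_PF0_applyCh_radDecoder (ρ : Matrix (Bit × Fin dR) (Bit × Fin dR) ℂ) :
    (PF0 * applyCh (fun j => extB (radDecoder S j)) ρ).trace =
      4⁻¹ * ∑ x, ∑ z, (QF0 * applyCh S (maskB dR x z * ρ * (maskB dR x z)ᴴ)).trace := by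
  simp only [applyCh, Matrix.mul_sum, Matrix.trace_sum]
  rw [sum_radDecoder S fun K => (PF0 * (extB K * ρ * (extB K)ᴴ)).trace]
  simp only [sum_trace_PF0_extB_radKraus, ← Finset.mul_sum]
  congr 1
  rw [Finset.sum_comm]
  exact Finset.sum_congr rfl fun x _ => Finset.sum_comm

lemma trace_Pepr0_applyCh_radDecoder (ρ : Matrix (Bit × Fin dR) (Bit × Fin dR) ℂ) :
    (Pepr0 * applyCh (fun j => extB (radDecoder S j)) ρ).trace =
      4⁻¹ * ∑ x, ∑ z, (Qxz0 x z * applyCh S (maskB dR x z * ρ * (maskB dR x z)ᴴ)).trace := by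
  simp only [applyCh, Matrix.mul_sum, Matrix.trace_sum]
  rw [sum_radDecoder S fun K => (Pepr0 * (extB K * ρ * (extB K)ᴴ)).trace]
  simp only [trace_Pepr0_extB_radKraus, ← Finset.mul_sum]
  congr 1
  rw [Finset.sum_comm]
  exact Finset.sum_congr rfl fun x _ => Finset.sum_comm

end

theorem superdense_decoder_implies_rad_decoder_general
    (dH dR : ℕ)
    (ψ : Fin dH × Bit × Fin dR → ℂ)
    (γ ε : ℝ)
    (hdec : ∃ (k : ℕ) (S : Fin k → Matrix ((Bit × Bit) × Bit) (Bit × Fin dR) ℂ),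
      IsSupDecoder ψ γ ε S) :
    ∃ (k : ℕ) (K : Fin k → Matrix (Bit × Bit) (Fin dR) ℂ),
      IsRadDecoder ψ γ ε K := by
  obtain ⟨k, S, hS, hflag, hdecode⟩ := hdec
  have hPF0 : ((PF0 * applyCh (fun j => extB (radDecoder S j)) (rhoBR ψ)).trace).re =
      1 / 4 * ∑ x, ∑ z, ((QF0 * applyCh S (rhoXZ ψ x z)).trace).re := by
    rw [trace_PF0_applyCh_radDecoder]
    simp [Complex.re_sum, rhoXZ]
  have hPepr0 : ((Pepr0 * applyCh (fun j => extB (radDecoder S j)) (rhoBR ψ)).trace).re =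
      1 / 4 * ∑ x, ∑ z, ((Qxz0 x z * applyCh S (rhoXZ ψ x z)).trace).re := by
    rw [trace_Pepr0_applyCh_radDecoder]
    simp [Complex.re_sum, rhoXZ]
  refine ⟨_, radDecoder S, isKraus_radDecoder S hS, ?_, ?_⟩
  · rw [hPF0]; exact hflag
  · rw [hPF0, hPepr0]; exact hdecode

/-- if there exists a `(γ,ε)`-superdense decoder against `|ψ⟩`,
then there exists a `(γ,ε)`-radiation decoder against `|ψ⟩`. -/
theorem superdense_decoder_implies_rad_decoder
    (dH dR : ℕ) (hdH : 1 ≤ dH) (hdR : 1 ≤ dR)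
    (ψ : Fin dH × Bit × Fin dR → ℂ)
    (hψ : ∑ p, Complex.normSq (ψ p) = 1)
    (γ ε : ℝ) (hγ : γ ∈ Set.Icc (0:ℝ) 1) (hε : ε ∈ Set.Icc (0:ℝ) 1)
    (hdec : ∃ (k : ℕ) (S : Fin k → Matrix ((Bit × Bit) × Bit) (Bit × Fin dR) ℂ),
      IsSupDecoder ψ γ ε S) :
    ∃ (k : ℕ) (K : Fin k → Matrix (Bit × Bit) (Fin dR) ℂ),
      IsRadDecoder ψ γ ε K :=
  superdense_decoder_implies_rad_decoder_general dH dR ψ γ ε hdec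

end BHRD
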